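/- Let d ≥ 1 and let γ be the standard Gaussian measure on ℝ^d (the law of a vector of d i.i.d. standard normal random variables). For all nonzero x, y ∈ ℝ^d, ∫ max(⟨w,x⟩, 0) · max(⟨w,y⟩, 0) dγ(w) = (1/(2π)) ‖x‖₂ ‖y‖₂ ( sin θ + (π − θ) cos θ ), where θ = arccos( ⟨x,y⟩ / (‖x‖₂ ‖y‖₂) ). -/

import Mathlib

open MeasureTheory

/-- The standard Gaussian measure on `ℝ^d`: the law of `d` i.i.d. standard normals. -/
noncomputable def stdGaussian (d : ℕ) : Measure (Fin d → ℝ) :=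
  Measure.pi fun _ : Fin d => ProbabilityTheory.gaussianReal 0 1

/-!
Under the standard Gaussian measure the pair `(⟪x, w⟫, ⟪y, w⟫)` is a centred Gaussian vector, so
its law depends only on the Gram matrix of `x` and `y` (compare characteristic functions). Hence
`x` and `y` may be replaced by `‖x‖ e₁` and `‖y‖ (cos θ e₁ + sin θ e₂)` in the plane. In polar
coordinates the planar integral factors into the radial moment `∫ r³ e^{-r²/2} dr = 2` and the
angular integral `∫ (cos a)₊ (cos (a - θ))₊ da = (sin θ + (π - θ) cos θ) / 2`, whose integrand
vanishes off the arc `[θ - π/2, π/2]`.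
-/

open Real Set InnerProductGeometry
open scoped RealInnerProductSpace

section

open ProbabilityTheory

lemma max_mul_zero_of_nonneg {R : Type*} [Semiring R] [LinearOrder R] [PosMulMono R]
    {a : R} (b : R) (ha : 0 ≤ a) : max (a * b) 0 = a * max b 0 := by
  rw [mul_max_of_nonneg _ _ ha, mul_zero]

lemma strongDual_comp_prod_innerSL {E : Type*} [NormedAddCommGroup E] [InnerProductSpace ℝ E]
    (ℓ : StrongDual ℝ (ℝ × ℝ)) (x y : E) :
    ℓ.comp ((innerSL ℝ x).prod (innerSL ℝ y)) = innerSL ℝ (ℓ (1, 0) • x + ℓ (0, 1) • y) := by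
  ext v
  have hv : ((⟪x, v⟫, ⟪y, v⟫) : ℝ × ℝ) =
      ⟪x, v⟫ • ((1 : ℝ), (0 : ℝ)) + ⟪y, v⟫ • ((0 : ℝ), (1 : ℝ)) := by
    ext <;> simp
  rw [ContinuousLinearMap.comp_apply, ContinuousLinearMap.prod_apply, innerSL_apply_apply,
    innerSL_apply_apply, hv, map_add, map_smul, map_smul, innerSL_apply_apply, inner_add_left,
    real_inner_smul_left, real_inner_smul_left, smul_eq_mul, smul_eq_mul]
  ring

lemma integral_stdGaussian_euclideanSpace_fin_two (f : EuclideanSpace ℝ (Fin 2) → ℝ) :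
    ∫ u, f u ∂ProbabilityTheory.stdGaussian (EuclideanSpace ℝ (Fin 2)) =
      ∫ p, f !₂[p.1, p.2] ∂(gaussianReal 0 1).prod (gaussianReal 0 1) := by
  rw [← map_pi_eq_stdGaussian, ← MeasurableEquiv.coe_toLp, integral_map_equiv,
    ← (measurePreserving_finTwoArrow _).integral_comp']
  congr 1
  ext w
  congr 2
  ext i
  fin_cases i <;> rfl

lemma integral_gaussianReal_prod_eq_integral_polarCoord (f : ℝ × ℝ → ℝ) :
    ∫ p, f p ∂(gaussianReal 0 1).prod (gaussianReal 0 1) =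
      (2 * π)⁻¹ * ∫ p in polarCoord.target, p.1 * exp (-p.1 ^ 2 / 2) * f (polarCoord.symm p) := by
  rw [gaussianReal_of_var_ne_zero 0 one_ne_zero, prod_withDensity (measurable_gaussianPDF 0 1)
    (measurable_gaussianPDF 0 1), integral_withDensity_eq_integral_toReal_smul
    (by fun_prop) (ae_of_all _ fun _ => ENNReal.mul_lt_top gaussianPDF_lt_top gaussianPDF_lt_top),
    ← Measure.volume_eq_prod, ← integral_comp_polarCoord_symm, ← integral_const_mul]
  refine setIntegral_congr_fun polarCoord.open_target.measurableSet fun p _ => ?_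
  have hpyth : (p.1 * cos p.2) ^ 2 + (p.1 * sin p.2) ^ 2 = p.1 ^ 2 := by
    linear_combination p.1 ^ 2 * sin_sq_add_cos_sq p.2
  have hsqrt : (√(2 * π))⁻¹ * (√(2 * π))⁻¹ = (2 * π)⁻¹ := by
    rw [← mul_inv, mul_self_sqrt (by positivity)]
  simp only [gaussianPDF_def, ENNReal.toReal_mul,
    ENNReal.toReal_ofReal (gaussianPDFReal_nonneg _ _ _)]
  simp only [polarCoord_symm_apply, gaussianPDFReal_def, smul_eq_mul, NNReal.coe_one, mul_one,
    sub_zero]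
  rw [← hpyth, neg_add, add_div, exp_add, ← hsqrt]
  ring

lemma integral_Ioi_pow_three_mul_exp_neg_sq_div_two :
    ∫ r in Ioi (0 : ℝ), r ^ 3 * exp (-r ^ 2 / 2) = 2 := by
  have h := integral_rpow_mul_exp_neg_mul_rpow (p := 2) (q := 3) (b := 1 / 2)
    (by norm_num) (by norm_num) (by norm_num)
  norm_num at h
  convert h using 5 with r
  ring

lemma integral_cos_mul_cos_sub (θ a b : ℝ) :
    ∫ t in a..b, cos t * cos (t - θ) =
      (sin (2 * b - θ) - sin (2 * a - θ)) / 4 + (b - a) * cos θ / 2 := by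
  have hderiv : ∀ t, HasDerivAt (fun t => sin (2 * t - θ) / 4 + t * cos θ / 2)
      (cos t * cos (t - θ)) t := by
    intro t
    have h2t : HasDerivAt (fun t => 2 * t - θ) 2 t := by
      simpa using ((hasDerivAt_id t).const_mul 2).sub_const θ
    refine ((h2t.sin.div_const 4).add ((hasDerivAt_mul_const (cos θ)).div_const 2)).congr_deriv ?_
    have hcos : cos θ = cos t * cos (t - θ) + sin t * sin (t - θ) := by
      rw [← cos_sub, sub_sub_cancel]
    rw [show 2 * t - θ = t + (t - θ) by ring, cos_add, hcos]
    ring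
  rw [intervalIntegral.integral_eq_sub_of_hasDerivAt (fun t _ => hderiv t)
    (Continuous.intervalIntegrable (by fun_prop) _ _)]
  ring

lemma integral_relu_cos_mul_relu_cos_sub {θ : ℝ} (h0 : 0 ≤ θ) (hπ : θ ≤ π) :
    ∫ a in (-π)..π, max (cos a) 0 * max (cos (a - θ)) 0 = (sin θ + (π - θ) * cos θ) / 2 := by
  have hπ0 := pi_pos
  have hcont : Continuous fun a => max (cos a) 0 * max (cos (a - θ)) 0 := by fun_prop
  have hcos_le : ∀ a, π / 2 ≤ |a| → |a| ≤ 3 * π / 2 → cos a ≤ 0 := fun a h1 h2 => by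
    rw [← cos_abs]; exact cos_nonpos_of_pi_div_two_le_of_le h1 (by linarith)
  have h_left : ∫ a in (-π)..(θ - π / 2), max (cos a) 0 * max (cos (a - θ)) 0 = 0 := by
    refine intervalIntegral.integral_zero_ae (ae_of_all _ fun a ha => ?_)
    rw [uIoc_of_le (by linarith)] at ha
    rcases le_or_gt a (-(π / 2)) with h | h
    · rw [max_eq_right (hcos_le a (by rw [abs_of_neg (by linarith)]; linarith)
        (by rw [abs_of_neg (by linarith)]; linarith [ha.1])), zero_mul]
    · rw [max_eq_right (hcos_le (a - θ) (by rw [abs_of_neg (by linarith [ha.2])]; linarith [ha.2])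
        (by rw [abs_of_neg (by linarith [ha.2])]; linarith)), mul_zero]
  have h_right : ∫ a in (π / 2)..π, max (cos a) 0 * max (cos (a - θ)) 0 = 0 := by
    refine intervalIntegral.integral_zero_ae (ae_of_all _ fun a ha => ?_)
    rw [uIoc_of_le (by linarith)] at ha
    rw [max_eq_right (hcos_le a (by rw [abs_of_pos (by linarith [ha.1])]; linarith [ha.1])
      (by rw [abs_of_pos (by linarith [ha.1])]; linarith [ha.2])), zero_mul]
  have h_mid : ∫ a in (θ - π / 2)..(π / 2), max (cos a) 0 * max (cos (a - θ)) 0 =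
      ∫ a in (θ - π / 2)..(π / 2), cos a * cos (a - θ) := by
    refine intervalIntegral.integral_congr fun a ha => ?_
    rw [uIcc_of_le (by linarith)] at ha
    rw [max_eq_left (cos_nonneg_of_mem_Icc ⟨by linarith [ha.1], ha.2⟩),
      max_eq_left (cos_nonneg_of_mem_Icc ⟨by linarith [ha.1], by linarith [ha.2]⟩)]
  rw [← intervalIntegral.integral_add_adjacent_intervals (a := -π) (b := θ - π / 2) (c := π)
      (hcont.intervalIntegrable _ _) (hcont.intervalIntegrable _ _),
    ← intervalIntegral.integral_add_adjacent_intervals (a := θ - π / 2) (b := π / 2) (c := π)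
      (hcont.intervalIntegrable _ _) (hcont.intervalIntegrable _ _),
    h_left, h_right, h_mid, integral_cos_mul_cos_sub,
    show 2 * (π / 2) - θ = π - θ by ring, show 2 * (θ - π / 2) - θ = -(π - θ) by ring,
    sin_neg, sin_pi_sub]
  ring

lemma integral_relu_mul_relu_gaussianReal_prod {θ : ℝ} (h0 : 0 ≤ θ) (hπ : θ ≤ π) :
    ∫ p, max p.1 0 * max (cos θ * p.1 + sin θ * p.2) 0
        ∂(gaussianReal 0 1).prod (gaussianReal 0 1) =
      (sin θ + (π - θ) * cos θ) / (2 * π) := by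
  have hpolar : EqOn
      (fun p : ℝ × ℝ => p.1 * exp (-p.1 ^ 2 / 2) * (max (polarCoord.symm p).1 0 *
        max (cos θ * (polarCoord.symm p).1 + sin θ * (polarCoord.symm p).2) 0))
      (fun p => p.1 ^ 3 * exp (-p.1 ^ 2 / 2) * (max (cos p.2) 0 * max (cos (p.2 - θ)) 0))
      (Ioi 0 ×ˢ Ioo (-π) π) := by
    rintro ⟨r, a⟩ ⟨hr, -⟩
    have hr : 0 ≤ r := le_of_lt hr
    simp only [polarCoord_symm_apply]
    rw [show cos θ * (r * cos a) + sin θ * (r * sin a) = r * cos (a - θ) by rw [cos_sub]; ring,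
      max_mul_zero_of_nonneg _ hr, max_mul_zero_of_nonneg _ hr]
    ring
  rw [integral_gaussianReal_prod_eq_integral_polarCoord, polarCoord_target,
    setIntegral_congr_fun (measurableSet_Ioi.prod measurableSet_Ioo) hpolar,
    Measure.volume_eq_prod, setIntegral_prod_mul (fun r => r ^ 3 * exp (-r ^ 2 / 2))
      (fun a => max (cos a) 0 * max (cos (a - θ)) 0),
    integral_Ioi_pow_three_mul_exp_neg_sq_div_two, ← integral_Ioc_eq_integral_Ioo,
    ← intervalIntegral.integral_of_le (by linarith [pi_pos]),
    integral_relu_cos_mul_relu_cos_sub h0 hπ]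
  field_simp

variable {E F : Type*}
  [NormedAddCommGroup E] [InnerProductSpace ℝ E] [FiniteDimensional ℝ E] [MeasurableSpace E]
  [BorelSpace E]
  [NormedAddCommGroup F] [InnerProductSpace ℝ F] [FiniteDimensional ℝ F] [MeasurableSpace F]
  [BorelSpace F]

lemma map_stdGaussian_eq_of_norm_comp_eq {G : Type*} [NormedAddCommGroup G] [NormedSpace ℝ G]
    [CompleteSpace G] [SecondCountableTopology G] [MeasurableSpace G] [BorelSpace G]
    (L₁ : E →L[ℝ] G) (L₂ : F →L[ℝ] G) (h : ∀ ℓ : StrongDual ℝ G, ‖ℓ.comp L₁‖ = ‖ℓ.comp L₂‖) :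
    (ProbabilityTheory.stdGaussian E).map L₁ = (ProbabilityTheory.stdGaussian F).map L₂ := by
  refine Measure.ext_of_charFunDual (funext fun ℓ => ?_)
  rw [charFunDual_map, charFunDual_map, charFunDual_stdGaussian, charFunDual_stdGaussian, h]

lemma map_inner_pair_stdGaussian_eq {x y : E} {x' y' : F} (hx : ‖x‖ = ‖x'‖) (hy : ‖y‖ = ‖y'‖)
    (hxy : ⟪x, y⟫ = ⟪x', y'⟫) :
    (ProbabilityTheory.stdGaussian E).map (fun v => (⟪x, v⟫, ⟪y, v⟫)) =
      (ProbabilityTheory.stdGaussian F).map (fun v => (⟪x', v⟫, ⟪y', v⟫)) := by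
  refine map_stdGaussian_eq_of_norm_comp_eq ((innerSL ℝ x).prod (innerSL ℝ y))
    ((innerSL ℝ x').prod (innerSL ℝ y')) fun ℓ => ?_
  rw [strongDual_comp_prod_innerSL, strongDual_comp_prod_innerSL, innerSL_apply_norm,
    innerSL_apply_norm, ← sq_eq_sq₀ (norm_nonneg _) (norm_nonneg _)]
  simp only [norm_add_sq_real, norm_smul, real_inner_smul_left, real_inner_smul_right, hx, hy, hxy]

theorem integral_relu_inner_mul_relu_inner_stdGaussian (x y : E) :
    ∫ v, max ⟪x, v⟫ 0 * max ⟪y, v⟫ 0 ∂ProbabilityTheory.stdGaussian E =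
      ‖x‖ * ‖y‖ * (sin (angle x y) + (π - angle x y) * cos (angle x y)) / (2 * π) := by
  set θ := angle x y
  set x' : EuclideanSpace ℝ (Fin 2) := !₂[‖x‖, 0]
  set y' : EuclideanSpace ℝ (Fin 2) := !₂[‖y‖ * cos θ, ‖y‖ * sin θ]
  have hx : ‖x‖ = ‖x'‖ := by
    simp [x', EuclideanSpace.norm_eq]
  have hy : ‖y‖ = ‖y'‖ := by
    rw [EuclideanSpace.norm_eq, ← sqrt_sq (norm_nonneg y)]
    congr 1
    simp only [y', norm_eq_abs, sq_abs, Fin.sum_univ_two, Matrix.cons_val_zero,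
      Matrix.cons_val_one, mul_pow]
    linear_combination -‖y‖ ^ 2 * sin_sq_add_cos_sq θ
  have hinner : ∀ u : EuclideanSpace ℝ (Fin 2), ⟪x', u⟫ = ‖x‖ * u 0 ∧
      ⟪y', u⟫ = ‖y‖ * (cos θ * u 0 + sin θ * u 1) := fun u => by
    simp only [x', y', PiLp.inner_apply, RCLike.inner_apply, conj_trivial, Fin.sum_univ_two,
      Matrix.cons_val_zero, Matrix.cons_val_one, mul_zero, add_zero]
    constructor <;> ring
  have hxy : ⟪x, y⟫ = ⟪x', y'⟫ := by
    rw [← cos_angle_mul_norm_mul_norm, (hinner y').1]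
    simp only [y', Matrix.cons_val_zero]
    ring
  have hrelu : Continuous fun p : ℝ × ℝ => max p.1 0 * max p.2 0 := by fun_prop
  calc ∫ v, max ⟪x, v⟫ 0 * max ⟪y, v⟫ 0 ∂ProbabilityTheory.stdGaussian E
      = ∫ p, max p.1 0 * max p.2 0
          ∂(ProbabilityTheory.stdGaussian E).map (fun v => (⟪x, v⟫, ⟪y, v⟫)) :=
        (integral_map (by fun_prop : Continuous fun v : E => (⟪x, v⟫, ⟪y, v⟫)).aemeasurable
          hrelu.aestronglyMeasurable).symm
    _ = ∫ u, max ⟪x', u⟫ 0 * max ⟪y', u⟫ 0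
          ∂ProbabilityTheory.stdGaussian (EuclideanSpace ℝ (Fin 2)) := by
        rw [map_inner_pair_stdGaussian_eq hx hy hxy,
          integral_map (by fun_prop : Continuous fun u => (⟪x', u⟫, ⟪y', u⟫)).aemeasurable
            hrelu.aestronglyMeasurable]
    _ = ‖x‖ * ‖y‖ * ∫ p, max p.1 0 * max (cos θ * p.1 + sin θ * p.2) 0
          ∂(gaussianReal 0 1).prod (gaussianReal 0 1) := by
        rw [integral_stdGaussian_euclideanSpace_fin_two, ← integral_const_mul]
        congr 1 with p
        rw [(hinner _).1, (hinner _).2, max_mul_zero_of_nonneg _ (norm_nonneg x),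
          max_mul_zero_of_nonneg _ (norm_nonneg y)]
        simp only [Matrix.cons_val_zero, Matrix.cons_val_one]
        ring
    _ = _ := by
        rw [integral_relu_mul_relu_gaussianReal_prod (angle_nonneg x y) (angle_le_pi x y)]
        ring

end

theorem relu_arccosine_kernel (d : ℕ)
    (x y : Fin d → ℝ) :
    ∫ w, max (∑ i, w i * x i) 0 * max (∑ i, w i * y i) 0 ∂(stdGaussian d) =
      (1 / (2 * Real.pi)) *
        (Real.sqrt (∑ i, x i ^ 2) * Real.sqrt (∑ i, y i ^ 2)) *
        (Real.sin (Real.arccos ((∑ i, x i * y i) /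
            (Real.sqrt (∑ i, x i ^ 2) * Real.sqrt (∑ i, y i ^ 2)))) +
          (Real.pi - Real.arccos ((∑ i, x i * y i) /
            (Real.sqrt (∑ i, x i ^ 2) * Real.sqrt (∑ i, y i ^ 2)))) *
          Real.cos (Real.arccos ((∑ i, x i * y i) /
            (Real.sqrt (∑ i, x i ^ 2) * Real.sqrt (∑ i, y i ^ 2))))) := by
  have key := integral_relu_inner_mul_relu_inner_stdGaussian (WithLp.toLp 2 x) (WithLp.toLp 2 y)
  rw [← ProbabilityTheory.map_pi_eq_stdGaussian, ← MeasurableEquiv.coe_toLp,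
    integral_map_equiv] at key
  simp only [MeasurableEquiv.coe_toLp, PiLp.inner_apply, EuclideanSpace.norm_eq, angle,
    RCLike.inner_apply, conj_trivial, mul_comm (y _) (x _), norm_eq_abs, sq_abs] at key
  rw [stdGaussian, key]
  ring
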